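/- arXiv:1608.03328 — 8 statements merged into one kernel-verified Lean document; each statement's English description precedes it below -/
import Mathlib

section
/- Let K be a number field with ring of integers O_K, let d ≥ 2, and let φ(x) = (x - γ)^d + c with γ, c ∈ O_K. If a prime ideal 𝔭 of O_K divides φ^n(γ) (the n-th iterate evaluated at γ) and 𝔭 does not divide φ^k(0) for any k ≥ 1, then 𝔭 does not divide φ^m(γ) for any 1 ≤ m < n. -/
open NumberField

theorem primitive_prime_divisor_of_not_dividing_orbit_of_zero
    (K : Type*) [Field K] [NumberField K]
    (d : ℕ) (hd : 2 ≤ d) (γ c : 𝓞 K)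
    (φ : 𝓞 K → 𝓞 K) (hφ : ∀ x, φ x = (x - γ) ^ d + c)
    (𝔭 : Ideal (𝓞 K)) (h𝔭 : 𝔭.IsPrime)
    (n : ℕ) (hn : φ^[n] γ ∈ 𝔭)
    (h0 : ∀ k ≥ 1, φ^[k] 0 ∉ 𝔭) :
    ∀ m, 1 ≤ m → m < n → φ^[m] γ ∉ 𝔭 := by
  intro m hm1 hmn hmem
  have key : ∀ x y, x - y ∈ 𝔭 → φ x - φ y ∈ 𝔭 := by
    intro x y hxy
    rw [hφ x, hφ y]
    have hdvd : (x - γ) - (y - γ) ∣ (x - γ) ^ d - (y - γ) ^ d :=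
      sub_dvd_pow_sub_pow _ _ d
    have hx : x - γ - (y - γ) = x - y := by ring
    rw [hx] at hdvd
    obtain ⟨t, ht⟩ := hdvd
    have heq : ((x - γ) ^ d + c) - ((y - γ) ^ d + c) = (x - y) * t := by
      rw [← ht]; ring
    rw [heq]
    exact Ideal.mul_mem_right _ _ hxy
  have iter : ∀ j, φ^[j] (φ^[m] γ) - φ^[j] 0 ∈ 𝔭 := by
    intro j
    induction j with
    | zero => simpa using hmem
    | succ j ih =>
      rw [Function.iterate_succ_apply', Function.iterate_succ_apply']
      exact key _ _ ih
  have h1 := iter (n - m)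
  rw [← Function.iterate_add_apply] at h1
  have hnm : n - m + m = n := Nat.sub_add_cancel (le_of_lt hmn)
  rw [hnm] at h1
  have h2 : φ^[n - m] 0 ∈ 𝔭 := by
    have := 𝔭.sub_mem hn h1
    simpa using this
  exact h0 (n - m) (by omega) h2
end

section
/- Let p be an odd prime, ζ a primitive p-th root of unity, and φ(x) = (x-1)^p + (2 - ζ). Then for all m ≠ n with m, n ≥ 1, the elements φ^m(1) and φ^n(1) generate coprime ideals in ℤ[ζ]. -/
open NumberField

theorem iterates_pairwise_coprime
    (p : ℕ+) (hp : (p : ℕ).Prime) (hodd : Odd (p : ℕ))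
    (ζ : 𝓞 (CyclotomicField p ℚ)) (hζ : IsPrimitiveRoot ζ (p : ℕ))
    (φ : 𝓞 (CyclotomicField p ℚ) → 𝓞 (CyclotomicField p ℚ))
    (hφ : ∀ x, φ x = (x - 1) ^ (p : ℕ) + (2 - ζ)) :
    ∀ m n : ℕ, 1 ≤ m → 1 ≤ n → m ≠ n →
      ∀ P : Ideal (𝓞 (CyclotomicField p ℚ)), P.IsPrime → P ≠ ⊥ →
        ¬(φ^[m] 1 ∈ P ∧ φ^[n] 1 ∈ P) := by
  have hppos : (p : ℕ) ≠ 0 := hp.pos.ne'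
  -- All iterates of 1 are ≡ 1 mod (1 - ζ)
  have hA : ∀ k : ℕ, (1 - ζ) ∣ φ^[k] 1 - 1 := by
    intro k
    induction k with
    | zero => simp
    | succ k ih =>
      rw [Function.iterate_succ_apply', hφ]
      have h : (φ^[k] 1 - 1) ^ (p : ℕ) + (2 - ζ) - 1
          = (φ^[k] 1 - 1) ^ (p : ℕ) + (1 - ζ) := by ring
      rw [h]
      exact dvd_add (dvd_pow ih hppos) dvd_rfl
  -- φ^[k] 0 = 1 - ζ for k ≥ 1
  have hC : ∀ k : ℕ, 1 ≤ k → φ^[k] 0 = 1 - ζ := by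
    intro k hk
    induction k with
    | zero => omega
    | succ k ih =>
      rcases Nat.eq_or_lt_of_le hk with h1 | h1
      · have : k = 0 := by omega
        subst this
        rw [Function.iterate_one, hφ]
        have : ((0 : 𝓞 (CyclotomicField p ℚ)) - 1) ^ (p : ℕ)
            = -1 ^ (p : ℕ) := by
          rw [zero_sub, hodd.neg_pow]
        rw [this]; ring
      · have hk' : 1 ≤ k := by omega
        rw [Function.iterate_succ_apply', ih hk', hφ]
        have : ((1 : 𝓞 (CyclotomicField p ℚ)) - ζ - 1) ^ (p : ℕ)
            = -ζ ^ (p : ℕ) := by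
          have : (1 : 𝓞 (CyclotomicField p ℚ)) - ζ - 1 = -ζ := by ring
          rw [this, hodd.neg_pow]
        rw [this, hζ.pow_eq_one]; ring
  -- φ preserves congruence mod any ideal
  have hB : ∀ (P : Ideal (𝓞 (CyclotomicField p ℚ))) (a b : 𝓞 (CyclotomicField p ℚ)),
      a - b ∈ P → ∀ k, φ^[k] a - φ^[k] b ∈ P := by
    intro P a b hab k
    induction k with
    | zero => simpa using hab
    | succ k ih =>
      rw [Function.iterate_succ_apply', Function.iterate_succ_apply', hφ, hφ]
      have h : (φ^[k] a - 1) ^ (p : ℕ) + (2 - ζ) - ((φ^[k] b - 1) ^ (p : ℕ) + (2 - ζ))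
          = (φ^[k] a - 1) ^ (p : ℕ) - (φ^[k] b - 1) ^ (p : ℕ) := by ring
      rw [h]
      have hdvd : (φ^[k] a - 1) - (φ^[k] b - 1) ∣
          (φ^[k] a - 1) ^ (p : ℕ) - (φ^[k] b - 1) ^ (p : ℕ) :=
        sub_dvd_pow_sub_pow _ _ _
      obtain ⟨c, hc⟩ := hdvd
      rw [hc]
      have : (φ^[k] a - 1) - (φ^[k] b - 1) = φ^[k] a - φ^[k] b := by ring
      rw [this]
      exact Ideal.mul_mem_right _ _ ih
  -- Key asymmetric case
  have key : ∀ (P : Ideal (𝓞 (CyclotomicField p ℚ))), P.IsPrime →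
      ∀ m n : ℕ, 1 ≤ m → m < n → φ^[m] 1 ∈ P → φ^[n] 1 ∈ P → False := by
    intro P hP m n hm hmn h1 h2
    have hiter : φ^[n] 1 = φ^[n - m] (φ^[m] 1) := by
      rw [← Function.iterate_add_apply]
      congr 1
      omega
    have hmem : φ^[n - m] (φ^[m] 1) - φ^[n - m] 0 ∈ P :=
      hB P (φ^[m] 1) 0 (by simpa using h1) (n - m)
    rw [hC (n - m) (by omega)] at hmem
    rw [hiter] at h2
    have hlam : (1 : 𝓞 (CyclotomicField p ℚ)) - ζ ∈ P := by
      have := P.sub_mem h2 hmem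
      simpa using this
    have h1mem : φ^[n] 1 - 1 ∈ P := by
      obtain ⟨c, hc⟩ := hA n
      rw [hc]
      exact Ideal.mul_mem_right _ _ hlam
    rw [hiter] at h1mem
    have : (1 : 𝓞 (CyclotomicField p ℚ)) ∈ P := by
      have := P.sub_mem h2 h1mem
      simpa using this
    exact hP.ne_top (P.eq_top_of_isUnit_mem this isUnit_one)
  rintro m n hm hn hmn P hP - ⟨h1, h2⟩
  rcases lt_or_gt_of_ne hmn with h | h
  · exact key P hP m n hm h h1 h2
  · exact key P hP n m hn h h2 h1
end

section
/- Let p be an odd prime, ζ a primitive p-th root of unity, and φ(x) = (x-1)^p + (2 - ζ). Then for every n ≥ 1, the polynomial φ^n(x) is irreducible over ℚ(ζ_p). -/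
open Polynomial NumberField

lemma charP_quotient_of_prime_mem {R : Type*} [CommRing R] {p : ℕ} (hp : p.Prime)
    (I : Ideal R) (hI : I ≠ ⊤) (h : (p : R) ∈ I) : CharP (R ⧸ I) p := by
  have hp0 : (p : R ⧸ I) = 0 := by
    rw [← map_natCast (Ideal.Quotient.mk I)]
    exact Ideal.Quotient.eq_zero_iff_mem.2 h
  refine ringChar.of_eq ?_
  refine Or.resolve_left ((Nat.dvd_prime hp).1 <| ringChar.dvd hp0) fun h1 => ?_
  haveI : CharP (R ⧸ I) 1 := ringChar.of_eq h1
  have h10 : ((1 : ℕ) : R ⧸ I) = 0 := CharP.cast_eq_zero _ 1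
  rw [Nat.cast_one, ← map_one (Ideal.Quotient.mk I)] at h10
  exact hI ((Ideal.eq_top_iff_one _).2 (Ideal.Quotient.eq_zero_iff_mem.1 h10))

set_option maxHeartbeats 1000000 in
set_option synthInstance.maxHeartbeats 1000000 in
theorem iterates_irreducible_unicritical
    (p : ℕ+) (hp : (p : ℕ).Prime) (hodd : Odd (p : ℕ))
    (ζ : CyclotomicField p ℚ) (hζ : IsPrimitiveRoot ζ (p : ℕ))
    (φ : Polynomial (CyclotomicField p ℚ))
    (hφ : φ = (X - C 1) ^ (p : ℕ) + C (2 - ζ)) :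
    ∀ n ≥ 1, Irreducible ((fun q => q.comp φ)^[n] X) := by
  have hfact : Fact (p : ℕ).Prime := ⟨hp⟩
  haveI : NeZero (((p : ℕ) : ℚ)) := ⟨by exact_mod_cast hp.ne_zero⟩
  haveI : IsCyclotomicExtension {(p : ℕ)} ℚ (CyclotomicField p ℚ) :=
    CyclotomicField.isCyclotomicExtension (p : ℕ) ℚ
  haveI : NumberField (CyclotomicField p ℚ) := IsCyclotomicExtension.numberField {(p : ℕ)} ℚ _
  have hζ' : IsPrimitiveRoot ζ ↑p := hζ
  set u : 𝓞 (CyclotomicField p ℚ) := hζ'.toInteger with hu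
  have hu_prime : Prime (u - 1) := hζ'.zeta_sub_one_prime'
  have hu_dvd : (u - 1) ∣ (p : 𝓞 (CyclotomicField p ℚ)) := hζ'.toInteger_sub_one_dvd_prime'
  have hu_pow : u ^ (p : ℕ) = 1 := hζ'.toInteger_isPrimitiveRoot.pow_eq_one
  set 𝔭 : Ideal (𝓞 (CyclotomicField p ℚ)) := Ideal.span {u - 1} with h𝔭
  have h𝔭prime : 𝔭.IsPrime := (Ideal.span_singleton_prime hu_prime.ne_zero).2 hu_prime
  have h𝔭top : 𝔭 ≠ ⊤ := h𝔭prime.ne_top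
  have hmem : u - 1 ∈ 𝔭 := Ideal.subset_span rfl
  have hpmem : ((p : ℕ) : 𝓞 (CyclotomicField p ℚ)) ∈ 𝔭 := (Ideal.mem_span_singleton).2 hu_dvd
  haveI : CharP (𝓞 (CyclotomicField p ℚ) ⧸ 𝔭) (p : ℕ) :=
    charP_quotient_of_prime_mem hp 𝔭 h𝔭top hpmem
  -- the integral model of φ
  set Φ : (𝓞 (CyclotomicField p ℚ))[X] := (X - C 1) ^ (p : ℕ) + C (2 - u) with hΦ
  have hΦmonic : Φ.Monic := by
    have h1 : ((X - C (1 : 𝓞 (CyclotomicField p ℚ))) ^ (p : ℕ)).Monic := (monic_X_sub_C 1).pow _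
    refine h1.add_of_left ?_
    refine lt_of_le_of_lt degree_C_le ?_
    rw [degree_pow, degree_X_sub_C, nsmul_eq_mul, mul_one]
    exact_mod_cast Nat.pos_of_ne_zero hp.ne_zero
  have hΦdeg : Φ.natDegree = (p : ℕ) := by
    rw [hΦ, natDegree_add_C, natDegree_pow, natDegree_X_sub_C, mul_one]
  have hΦdeg0 : Φ.natDegree ≠ 0 := by rw [hΦdeg]; exact hp.ne_zero
  -- iterates over the ring of integers
  set Ψ : ℕ → (𝓞 (CyclotomicField p ℚ))[X] := fun n => (fun q => q.comp Φ)^[n] X with hΨ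
  have hΨsucc : ∀ n, Ψ (n + 1) = (Ψ n).comp Φ := by
    intro n
    simp only [hΨ, Function.iterate_succ_apply']
  have hΨmonic : ∀ n, (Ψ n).Monic := by
    intro n
    induction n with
    | zero => simpa [hΨ] using monic_X
    | succ n ih => rw [hΨsucc]; exact ih.comp hΦmonic hΦdeg0
  have hΨdeg : ∀ n, (Ψ n).natDegree = (p : ℕ) ^ n := by
    intro n
    induction n with
    | zero => simp [hΨ]
    | succ n ih => rw [hΨsucc, natDegree_comp, ih, hΦdeg, pow_succ]
  -- evaluation facts
  have hΦeval : Φ.eval (1 - u) = 1 - u := by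
    rw [hΦ]
    simp only [eval_add, eval_pow, eval_sub, eval_X, eval_C]
    have h2 : (1 - u - 1 : 𝓞 (CyclotomicField p ℚ)) = -u := by ring
    rw [h2, hodd.neg_pow, hu_pow]
    ring
  have hΨeval : ∀ n, (Ψ n).eval (1 - u) = 1 - u := by
    intro n
    induction n with
    | zero => simp [hΨ]
    | succ n ih => rw [hΨsucc, eval_comp, hΦeval, ih]
  have hΦeval0 : Φ.eval 0 = 1 - u := by
    rw [hΦ]
    simp only [eval_add, eval_pow, eval_sub, eval_X, eval_C]
    have h2 : (0 - 1 : 𝓞 (CyclotomicField p ℚ)) = -1 := by ring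
    rw [h2, hodd.neg_pow, one_pow]
    ring
  have hΨcoeff0 : ∀ n, (Ψ (n + 1)).coeff 0 = 1 - u := by
    intro n
    rw [coeff_zero_eq_eval_zero, hΨsucc, eval_comp, hΦeval0, hΨeval]
  -- reduction mod 𝔭
  set q : 𝓞 (CyclotomicField p ℚ) →+* 𝓞 (CyclotomicField p ℚ) ⧸ 𝔭 := Ideal.Quotient.mk 𝔭 with hq
  have hq1 : q (2 - u) = 1 := by
    have h2 : (2 - u : 𝓞 (CyclotomicField p ℚ)) = 1 - (u - 1) := by ring
    rw [h2, map_sub, map_one, Ideal.Quotient.eq_zero_iff_mem.2 hmem, sub_zero]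
  have hΦbar : Φ.map q = X ^ (p : ℕ) := by
    rw [hΦ]
    rw [Polynomial.map_add, Polynomial.map_pow, Polynomial.map_sub, map_X, map_C, map_C, hq1,
      map_one, sub_pow_char]
    simp
  have hΨbar : ∀ n, (Ψ n).map q = X ^ ((p : ℕ) ^ n) := by
    intro n
    induction n with
    | zero => simp [hΨ]
    | succ n ih =>
      rw [hΨsucc, Polynomial.map_comp, ih, hΦbar, X_pow_comp, ← pow_mul, pow_succ, mul_comm]
  have hmem_coeff : ∀ n, ∀ i, i < (p : ℕ) ^ n → (Ψ n).coeff i ∈ 𝔭 := by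
    intro n i hi
    have h2 : q ((Ψ n).coeff i) = 0 := by
      rw [← coeff_map, hΨbar, coeff_X_pow, if_neg hi.ne]
    exact Ideal.Quotient.eq_zero_iff_mem.1 h2
  have hnotmem : ∀ n, (Ψ (n + 1)).coeff 0 ∉ 𝔭 ^ 2 := by
    intro n hcon
    rw [hΨcoeff0, h𝔭, Ideal.span_singleton_pow, Ideal.mem_span_singleton] at hcon
    have h2 : (u - 1) ^ 2 ∣ (u - 1) := by
      have h3 := dvd_neg.mpr hcon
      rwa [neg_sub] at h3
    have h3 : (u - 1) * (u - 1) ∣ (u - 1) * 1 := by rwa [mul_one, ← sq]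
    have h4 : (u - 1) ∣ 1 := (mul_dvd_mul_iff_left hu_prime.ne_zero).1 h3
    exact hu_prime.not_isUnit (isUnit_of_dvd_one h4)
  -- Eisenstein, hence irreducible over the ring of integers
  have hirr : ∀ n, Irreducible (Ψ (n + 1)) := by
    intro n
    have hE : (Ψ (n + 1)).IsEisensteinAt 𝔭 := by
      refine (hΨmonic (n + 1)).isEisensteinAt_of_mem_of_notMem h𝔭top ?_ (hnotmem n)
      intro i hi
      exact hmem_coeff (n + 1) i (by rwa [hΨdeg] at hi)
    refine hE.irreducible h𝔭prime (hΨmonic (n + 1)).isPrimitive ?_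
    rw [hΨdeg]
    exact pow_pos hp.pos _
  -- transfer to the field
  have halg : algebraMap (𝓞 (CyclotomicField p ℚ)) (CyclotomicField p ℚ) u = ζ := rfl
  have hmap : Φ.map (algebraMap (𝓞 (CyclotomicField p ℚ)) (CyclotomicField p ℚ)) = φ := by
    rw [hΦ, hφ]
    simp only [Polynomial.map_add, Polynomial.map_pow, Polynomial.map_sub, Polynomial.map_one,
      Polynomial.map_ofNat, map_X, map_C, map_one, map_sub, map_ofNat, halg]
  have hmapiter : ∀ n,
      (Ψ n).map (algebraMap (𝓞 (CyclotomicField p ℚ)) (CyclotomicField p ℚ)) =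
        (fun q => q.comp φ)^[n] X := by
    intro n
    induction n with
    | zero => simp [hΨ]
    | succ n ih =>
      rw [hΨsucc, Polynomial.map_comp, ih, hmap, Function.iterate_succ_apply']
  intro n hn
  obtain ⟨m, rfl⟩ : ∃ m, n = m + 1 := ⟨n - 1, (Nat.succ_pred_eq_of_pos hn).symm⟩
  rw [← hmapiter]
  exact ((hΨmonic (m + 1)).irreducible_iff_irreducible_map_fraction_map).1 (hirr m)
end

section
/- Let p be a prime with p ≡ 3 (mod 4) and φ(x) = (x - p)^2 + 2p - p^2. Then φ^n(p) ≡ 1 (mod 4) for all n ≥ 1, and consequently there is no integer y with φ^n(p) = p·y^2 for any n ≥ 1. -/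
theorem case_p_three_mod_four (p : ℕ) (hp : p.Prime) (hmod : p % 4 = 3)
    (φ : ℤ → ℤ) (hφ : ∀ x, φ x = (x - (p : ℤ)) ^ 2 + 2 * p - p ^ 2) :
    (∀ n ≥ 1, Int.ModEq 4 (φ^[n] (p : ℤ)) 1) ∧
      ∀ n ≥ 1, ∀ y : ℤ, φ^[n] (p : ℤ) ≠ p * y ^ 2 := by
  have hp3 : ((p : ZMod 4)) = 3 := by
    rw [← ZMod.natCast_mod, hmod]; rfl
  have key : ∀ n, 1 ≤ n → ((φ^[n] (p : ℤ)) : ZMod 4) = 1 := by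
    intro n hn
    induction n with
    | zero => omega
    | succ m ih =>
      rcases Nat.eq_zero_or_pos m with hm | hm
      · subst hm
        rw [Function.iterate_succ_apply', Function.iterate_zero_apply, hφ]
        push_cast
        rw [hp3]; decide
      rw [Function.iterate_succ_apply', hφ]
      push_cast
      · rw [ih hm, hp3]; decide
  constructor
  · intro n hn
    have h := key n hn
    have : ((φ^[n] (p:ℤ)) : ZMod 4) = ((1 : ℤ) : ZMod 4) := by rw [h]; norm_num
    have h2 := (ZMod.intCast_eq_intCast_iff _ _ _).mp this
    exact_mod_cast h2
  · intro n hn y hy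
    have h1 := key n hn
    rw [hy] at h1
    push_cast at h1
    rw [hp3] at h1
    have : ∀ z : ZMod 4, 3 * z ^ 2 ≠ 1 := by decide
    exact this _ h1
end

section
/- Let p be a prime with p ≡ 3 or 6 (mod 7) and φ(x) = (x - p)^2 + 2p - p^2. Then φ^n(p) ≡ 1 (mod 7) for all n ≥ 3, and there is no integer y with φ^n(p) = p·y^2 for any n ≥ 3. -/
theorem case_p_three_or_six_mod_seven (p : ℕ) (hp : p.Prime)
    (hmod : p % 7 = 3 ∨ p % 7 = 6)
    (φ : ℤ → ℤ) (hφ : ∀ x, φ x = (x - (p : ℤ)) ^ 2 + 2 * p - p ^ 2) :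
    (∀ n ≥ 3, Int.ModEq 7 (φ^[n] (p : ℤ)) 1) ∧
      ∀ n ≥ 3, ∀ y : ℤ, φ^[n] (p : ℤ) ≠ p * y ^ 2 := by
  have hq : ((p : ℕ) : ZMod 7) = 3 ∨ ((p : ℕ) : ZMod 7) = 6 := by
    have h1 : ((p : ℕ) : ZMod 7) = ((p % 7 : ℕ) : ZMod 7) := (ZMod.natCast_mod p 7).symm
    rcases hmod with h | h <;> [left; right] <;> rw [h1, h] <;> decide
  have key : ∀ n ≥ 3, ((φ^[n] (p : ℤ)) : ZMod 7) = 1 := by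
    intro n hn
    induction n with
    | zero => omega
    | succ m ih =>
      rcases Nat.lt_or_ge m 3 with hm | hm
      · interval_cases m
        · omega
        · omega
        · -- n = 3
          rw [Function.iterate_succ_apply, Function.iterate_succ_apply,
            Function.iterate_succ_apply, Function.iterate_zero_apply,
            hφ, hφ, hφ]
          push_cast
          rcases hq with h | h <;> rw [h] <;> ring_nf <;> decide
      · rw [Function.iterate_succ_apply', hφ]
        push_cast
        rw [ih hm]
        ring
  constructor
  · intro n hn
    have := (ZMod.intCast_eq_intCast_iff (φ^[n] (p : ℤ)) 1 7).mp (by simpa using key n hn)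
    exact_mod_cast this
  · intro n hn y hy
    have h1 := key n hn
    rw [hy] at h1
    push_cast at h1
    have h2 : ∀ z : ZMod 7, 3 * z ^ 2 ≠ 1 ∧ 6 * z ^ 2 ≠ 1 := by decide
    rcases hq with h | h <;> rw [h] at h1
    · exact (h2 _).1 h1
    · exact (h2 _).2 h1
end

section
/- Let K be a number field, p an odd rational prime, and ν a normalized exponential valuation on K above p with ν(p) > 1. Suppose f(x) = Σ_{i=0}^p c_i x^i ∈ K[x] satisfies ν(c_p) = 0, ν(c_i) > 1 for 1 ≤ i ≤ p-1, and ν(c_0) = 1. Then for every α ∈ K with ν(α) ≥ 0, the polynomial g(x) = f(x + α) - c_p α^p is Eisenstein with respect to ν: its leading coefficient has valuation 0, all intermediate coefficients have valuation > 1, and its constant term has valuation exactly 1. -/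
open Polynomial

section Aux

variable {K : Type*} [Field K] (ν : AddValuation K (WithTop ℤ))

lemma aux_nu_nat_nonneg (n : ℕ) : (0 : WithTop ℤ) ≤ ν (n : K) := by
  induction n with
  | zero => simp [ν.map_zero]
  | succ n ih =>
    push_cast
    refine le_trans ?_ (ν.map_add _ 1)
    simp [ν.map_one, ih]

lemma aux_nu_sum_lt {ι : Type*} (s : Finset ι) (g : ι → K) (c : WithTop ℤ)
    (hc : c < ⊤) (h : ∀ i ∈ s, c < ν (g i)) : c < ν (∑ i ∈ s, g i) := by
  classical
  induction s using Finset.induction with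
  | empty => simpa [ν.map_zero] using hc
  | @insert a s hni ih =>
    rw [Finset.sum_insert hni]
    refine lt_of_lt_of_le (lt_min (h a (by simp)) (ih fun i hi => h i (by simp [hi])))
      (ν.map_add _ _)

lemma aux_nu_add_eq (a b : K) (ha : ν a = 1) (hb : (1 : WithTop ℤ) < ν b) :
    ν (a + b) = 1 := by
  refine le_antisymm ?_ ?_
  · by_contra hlt
    push_neg at hlt
    have h2 : min (ν (a + b)) (ν (-b)) ≤ ν ((a + b) + -b) := ν.map_add _ _
    have he : (a + b) + -b = a := by ring
    rw [he, ν.map_neg] at h2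
    exact absurd (lt_of_lt_of_le (lt_min hlt hb) h2) (by rw [ha]; exact lt_irrefl _)
  · calc (1 : WithTop ℤ) = min (ν a) (ν b) := by rw [min_eq_left (ha ▸ le_of_lt hb), ha]
      _ ≤ ν (a + b) := ν.map_add a b

lemma aux_comp_coeff (p : ℕ) (f : Polynomial K) (α : K) (k : ℕ) (hd : f.natDegree ≤ p) :
    (f.comp (X + C α)).coeff k
      = ∑ n ∈ Finset.range (p + 1), ((n + k).choose k : K) * f.coeff (n + k) * α ^ n := by
  rw [← taylor_apply, taylor_coeff]
  rw [Polynomial.eval_eq_sum_range' (n := p + 1)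
    (lt_of_le_of_lt (natDegree_hasseDeriv_le f k) (by omega))]
  refine Finset.sum_congr rfl fun n _ => ?_
  rw [hasseDeriv_coeff]

end Aux

theorem eisenstein_after_translation
    (K : Type*) [Field K] [NumberField K]
    (p : ℕ) (hp : p.Prime) (hodd : Odd p)
    (ν : AddValuation K (WithTop ℤ)) (hνp : (1 : WithTop ℤ) < ν (p : K))
    (f : Polynomial K) (hdeg : f.natDegree = p)
    (hcp : ν (f.coeff p) = 0)
    (hci : ∀ i, 1 ≤ i → i ≤ p - 1 → (1 : WithTop ℤ) < ν (f.coeff i))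
    (hc0 : ν (f.coeff 0) = 1)
    (α : K) (hα : (0 : WithTop ℤ) ≤ ν α) :
    ∀ g : Polynomial K, g = f.comp (X + C α) - C (f.coeff p * α ^ p) →
      ν (g.coeff p) = 0 ∧
      (∀ i, 1 ≤ i → i ≤ p - 1 → (1 : WithTop ℤ) < ν (g.coeff i)) ∧
      ν (g.coeff 0) = 1 := by
  intro g hg
  have hp2 : 2 ≤ p := hp.two_le
  have hdle : f.natDegree ≤ p := le_of_eq hdeg
  have hcoeff0 : ∀ i, p < i → f.coeff i = 0 := fun i hi =>
    coeff_eq_zero_of_natDegree_lt (hdeg ▸ hi)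
  have hαpow : ∀ n : ℕ, (0 : WithTop ℤ) ≤ ν (α ^ n) := fun n => by
    rw [ν.map_pow]; exact nsmul_nonneg hα n
  -- general bound for a term ((n+k).choose k) * coeff (n+k) * α^n with 1 ≤ k
  have hterm : ∀ k n : ℕ, 1 ≤ k → k ≤ p - 1 →
      (1 : WithTop ℤ) < ν (((n + k).choose k : K) * f.coeff (n + k) * α ^ n) := by
    intro k n hk1 hkp
    rw [ν.map_mul, ν.map_mul]
    rcases lt_trichotomy (n + k) p with h | h | h
    · have h1 : (1 : WithTop ℤ) < ν (f.coeff (n + k)) := hci _ (by omega) (by omega)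
      calc (1 : WithTop ℤ) < ν (f.coeff (n + k)) := h1
        _ = 0 + ν (f.coeff (n + k)) + 0 := by rw [zero_add, add_zero]
        _ ≤ ν ((n + k).choose k : K) + ν (f.coeff (n + k)) + ν (α ^ n) :=
          add_le_add (add_le_add (aux_nu_nat_nonneg ν _) le_rfl) (hαpow n)
    · -- n + k = p : p ∣ choose
      have hdvd : p ∣ (n + k).choose k := by
        rw [h]; exact hp.dvd_choose_self (by omega) (by omega)
      obtain ⟨m, hm⟩ := hdvd
      have hν : (1 : WithTop ℤ) < ν (((n + k).choose k : K)) := by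
        rw [hm]
        push_cast
        rw [ν.map_mul]
        calc (1 : WithTop ℤ) < ν (p : K) := hνp
          _ = ν (p : K) + 0 := (add_zero _).symm
          _ ≤ ν (p : K) + ν (m : K) := add_le_add le_rfl (aux_nu_nat_nonneg ν m)
      calc (1 : WithTop ℤ) < ν ((n + k).choose k : K) := hν
        _ = ν ((n + k).choose k : K) + 0 + 0 := by rw [add_zero, add_zero]
        _ ≤ ν ((n + k).choose k : K) + ν (f.coeff (n + k)) + ν (α ^ n) := by
            refine add_le_add (add_le_add le_rfl ?_) (hαpow n)
            rw [h, hcp]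
    · rw [hcoeff0 _ h, ν.map_zero]
      simp
  constructor
  · -- leading coefficient
    rw [hg]
    rw [coeff_sub, coeff_C, if_neg (by omega), sub_zero,
      aux_comp_coeff p f α p hdle]
    rw [Finset.sum_eq_single 0]
    · simpa using hcp
    · intro n _ hn0
      rw [hcoeff0 (n + p) (by omega)]
      ring
    · simp
  refine ⟨?_, ?_⟩
  · -- intermediate coefficients
    intro k hk1 hkp
    rw [hg, coeff_sub, coeff_C, if_neg (by omega), sub_zero,
      aux_comp_coeff p f α k hdle]
    exact aux_nu_sum_lt ν _ _ _ (by exact_mod_cast WithTop.coe_lt_top (1 : ℤ))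
      fun n _ => hterm k n hk1 hkp
  · -- constant coefficient
    rw [hg, coeff_sub, coeff_C, if_pos rfl, aux_comp_coeff p f α 0 hdle]
    have hsimp : ∀ n : ℕ, ((n + 0).choose 0 : K) * f.coeff (n + 0) * α ^ n
        = f.coeff n * α ^ n := by intro n; simp
    rw [Finset.sum_congr rfl fun n _ => hsimp n, Finset.sum_range_succ,
      add_sub_cancel_right]
    have h0mem : (0 : ℕ) ∈ Finset.range p := by simp; omega
    rw [← Finset.add_sum_erase _ _ h0mem]
    have : f.coeff 0 * α ^ 0 = f.coeff 0 := by simp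
    rw [this]
    refine aux_nu_add_eq ν _ _ hc0 ?_
    refine aux_nu_sum_lt ν _ _ _ (by exact_mod_cast WithTop.coe_lt_top (1 : ℤ)) ?_
    intro i hi
    simp only [Finset.mem_erase, Finset.mem_range] at hi
    rw [ν.map_mul]
    calc (1 : WithTop ℤ) < ν (f.coeff i) := hci i (by omega) (by omega)
      _ = ν (f.coeff i) + 0 := (add_zero _).symm
      _ ≤ ν (f.coeff i) + ν (α ^ i) := add_le_add le_rfl (hαpow i)
end

section
/- Let p be an odd prime, ζ a primitive p-th root of unity, and 2 ≤ i ≤ p an integer. Let φ(x) = (x - ζ^i)^p + (1 + ζ^i - ζ). Then φ(0) = ζ^i - ζ and φ(ζ^i - ζ) = ζ^i - ζ, so 0 is strictly preperiodic under φ; moreover ν(φ^n(0)) = 1 for all n ≥ 1, where ν is the normalized valuation of ℚ(ζ_p) above p. -/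
open NumberField

theorem orbit_and_valuation_conjugated_family
    (p : ℕ+) (hp : (p : ℕ).Prime) (hodd : Odd (p : ℕ))
    (ζ : 𝓞 (CyclotomicField p ℚ)) (hζ : IsPrimitiveRoot ζ (p : ℕ))
    (i : ℕ) (hi1 : 2 ≤ i) (hi2 : i ≤ (p : ℕ))
    (φ : 𝓞 (CyclotomicField p ℚ) → 𝓞 (CyclotomicField p ℚ))
    (hφ : ∀ x, φ x = (x - ζ ^ i) ^ (p : ℕ) + (1 + ζ ^ i - ζ)) :
    φ 0 = ζ ^ i - ζ ∧ φ (ζ ^ i - ζ) = ζ ^ i - ζ ∧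
      (∀ n ≥ 1, φ^[n] 0 ≠ 0) ∧
      (∀ n ≥ 1,
        φ^[n] 0 ∈ Ideal.span ({1 - ζ} : Set (𝓞 (CyclotomicField p ℚ))) ∧
        φ^[n] 0 ∉ (Ideal.span ({1 - ζ} : Set (𝓞 (CyclotomicField p ℚ)))) ^ 2) := by
  haveI : NeZero ((p : ℕ)) := ⟨p.ne_zero⟩
  haveI : IsCyclotomicExtension {(p : ℕ)} ℚ (CyclotomicField p ℚ) :=
    CyclotomicField.isCyclotomicExtension (p : ℕ) ℚ
  haveI : NumberField (CyclotomicField p ℚ) :=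
    IsCyclotomicExtension.numberField {(p : ℕ)} ℚ (CyclotomicField p ℚ)
  haveI : Fact ((p : ℕ)).Prime := ⟨hp⟩
  have hppos : 0 < (p : ℕ) := p.pos
  -- basic computations
  have h0 : φ 0 = ζ ^ i - ζ := by
    rw [hφ, zero_sub, hodd.neg_pow, pow_right_comm, hζ.pow_eq_one, one_pow]
    ring
  have hfix : φ (ζ ^ i - ζ) = ζ ^ i - ζ := by
    have h1 : ζ ^ i - ζ - ζ ^ i = -ζ := by ring
    rw [hφ, h1, hodd.neg_pow, hζ.pow_eq_one]
    ring
  have hiter : ∀ n, 1 ≤ n → φ^[n] 0 = ζ ^ i - ζ := by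
    intro n hn
    induction n with
    | zero => omega
    | succ m ih =>
      rcases Nat.eq_or_lt_of_le hn with h | h
      · simpa [← h] using h0
      · rw [Function.iterate_succ_apply', ih (by omega), hfix]
  -- set up arithmetic of `ζ ^ (i-1) - 1`
  set η : 𝓞 (CyclotomicField p ℚ) := ζ ^ (i - 1) with hη_def
  have hi' : i - 1 + 1 = i := by omega
  have hndvd : ¬ (p : ℕ) ∣ (i - 1) := by
    intro h
    have h2 : (p : ℕ) ≤ i - 1 := Nat.le_of_dvd (show 0 < i - 1 by omega) h
    omega
  have hcop : (i - 1).Coprime (p : ℕ) := (hp.coprime_iff_not_dvd.mpr hndvd).symm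
  have hη : IsPrimitiveRoot η (p : ℕ) := hζ.pow_of_coprime (i - 1) hcop
  have hdvd1 : (ζ - 1) ∣ (η - 1) := by
    have := sub_dvd_pow_sub_pow ζ 1 (i - 1)
    rwa [one_pow] at this
  have hdvd2 : (η - 1) ∣ (ζ - 1) := by
    obtain ⟨k, -, hk⟩ := hη.eq_pow_of_pow_eq_one hζ.pow_eq_one
    have := sub_dvd_pow_sub_pow η 1 k
    rwa [one_pow, hk] at this
  have hassoc : Associated (ζ - 1) (η - 1) := associated_of_dvd_dvd hdvd1 hdvd2
  -- `ζ - 1` is prime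
  have hζK : IsPrimitiveRoot ((ζ : CyclotomicField p ℚ)) (p : ℕ) :=
    IsPrimitiveRoot.coe_submonoidClass_iff.mpr hζ
  have hprime : Prime (ζ - 1) := by
    have := hζK.zeta_sub_one_prime'
    have heq : hζK.toInteger = ζ := by ext; rfl
    rwa [heq] at this
  have hprime' : Prime (1 - ζ) := by
    have : (1 - ζ) = -(ζ - 1) := by ring
    rw [this]
    exact hprime.neg
  set P : Ideal (𝓞 (CyclotomicField p ℚ)) := Ideal.span {1 - ζ} with hP_def
  have hPbot : P ≠ ⊥ := by
    rw [hP_def, Ne, Ideal.span_singleton_eq_bot]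
    exact hprime'.ne_zero
  have hPtop : P ≠ ⊤ := by
    rw [hP_def, Ne, Ideal.span_singleton_eq_top]
    exact hprime'.not_unit
  have hlt : P ^ 2 < P := by
    have := Ideal.pow_right_strictAnti P hPbot hPtop (show (1 : ℕ) < 2 by norm_num)
    simpa using this
  have hassoc' : Associated (1 - ζ) (η - 1) := by
    refine Associated.trans ?_ hassoc
    exact ⟨-1, by rw [Units.val_neg, Units.val_one, mul_neg, mul_one]; ring⟩
  have spanEq : P = Ideal.span {η - 1} :=
    Ideal.span_singleton_eq_span_singleton.mpr hassoc'
  have hfact : ζ ^ i - ζ = ζ * (η - 1) := by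
    conv_lhs => rw [← hi']
    rw [hη_def]
    ring
  have hmem : ζ ^ i - ζ ∈ P := by
    rw [hfact, spanEq]
    exact Ideal.mul_mem_left _ ζ (Ideal.mem_span_singleton_self _)
  have hnmem : ζ ^ i - ζ ∉ P ^ 2 := by
    intro h
    have heq2 : η - 1 = ζ ^ ((p : ℕ) - 1) * (ζ ^ i - ζ) := by
      rw [hfact, ← mul_assoc, ← pow_succ, Nat.sub_add_cancel hppos, hζ.pow_eq_one, one_mul]
    have hmem2 : η - 1 ∈ P ^ 2 := by
      rw [heq2]
      exact Ideal.mul_mem_left _ _ h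
    have hle : P ≤ P ^ 2 :=
      le_trans (le_of_eq spanEq) ((Ideal.span_singleton_le_iff_mem _).mpr hmem2)
    exact hlt.not_ge hle
  have hne : ζ ^ i - ζ ≠ 0 := by
    rw [hfact]
    refine mul_ne_zero (hζ.ne_zero p.ne_zero) (sub_ne_zero.mpr ?_)
    exact hζ.pow_ne_one_of_pos_of_lt (by omega) (by omega)
  refine ⟨h0, hfix, ?_, ?_⟩
  · intro n hn
    rw [hiter n hn]
    exact hne
  · intro n hn
    rw [hiter n hn]
    exact ⟨hmem, hnmem⟩
end

section
/- Let p be an odd prime, ζ a primitive p-th root of unity, and 2 ≤ i ≤ p. Then every iterate φ^n of φ(x) = (x - ζ^i)^p + (1 + ζ^i - ζ) is irreducible over ℚ(ζ_p). -/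
open Polynomial NumberField

set_option maxHeartbeats 1000000
set_option synthInstance.maxHeartbeats 1000000

private lemma iterate_comp_apply {R : Type*} [CommSemiring R] (φ : R[X]) (n : ℕ) (q : R[X]) :
    (fun r : R[X] => r.comp φ)^[n] q = q.comp ((fun r : R[X] => r.comp φ)^[n] X) := by
  induction n generalizing q with
  | zero => simp
  | succ n ih =>
    rw [Function.iterate_succ_apply, Function.iterate_succ_apply, ih (q.comp φ), ih (X.comp φ),
      X_comp, comp_assoc]

theorem iterates_irreducible_conjugated_family
    (p : ℕ+) (hp : (p : ℕ).Prime) (hodd : Odd (p : ℕ))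
    (ζ : CyclotomicField p ℚ) (hζ : IsPrimitiveRoot ζ (p : ℕ))
    (i : ℕ) (hi1 : 2 ≤ i) (hi2 : i ≤ (p : ℕ))
    (φ : Polynomial (CyclotomicField p ℚ))
    (hφ : φ = (X - C (ζ ^ i)) ^ (p : ℕ) + C (1 + ζ ^ i - ζ)) :
    ∀ n ≥ 1, Irreducible ((fun q => q.comp φ)^[n] X) := by
  haveI : Fact (p : ℕ).Prime := ⟨hp⟩
  haveI : IsCyclotomicExtension {(p : ℕ)} ℚ (CyclotomicField p ℚ) :=
    CyclotomicField.isCyclotomicExtension (p : ℕ) ℚ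
  haveI : NumberField (CyclotomicField p ℚ) :=
    IsCyclotomicExtension.numberField {(p : ℕ)} ℚ (CyclotomicField p ℚ)
  set η : 𝓞 (CyclotomicField p ℚ) := hζ.toInteger with hηdef
  have hηcoe : (algebraMap (𝓞 (CyclotomicField p ℚ)) (CyclotomicField p ℚ)) η = ζ := rfl
  set π : 𝓞 (CyclotomicField p ℚ) := η - 1 with hπdef
  have hπ : Prime π := hζ.zeta_sub_one_prime'
  have hπ0 : π ≠ 0 := hπ.ne_zero
  set 𝔭 : Ideal (𝓞 (CyclotomicField p ℚ)) := Ideal.span {π} with h𝔭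
  have hPprime : 𝔭.IsPrime := (Ideal.span_singleton_prime hπ0).mpr hπ
  have hpmem : (((p : ℕ) : 𝓞 (CyclotomicField p ℚ))) ∈ 𝔭 := by
    rw [h𝔭, Ideal.mem_span_singleton]
    exact_mod_cast hζ.toInteger_sub_one_dvd_prime'
  have hη1 : η ^ (p : ℕ) = 1 := hζ.toInteger_isPrimitiveRoot.pow_eq_one
  set γ : 𝓞 (CyclotomicField p ℚ) := η ^ i with hγdef
  have hγ1 : γ ^ (p : ℕ) = 1 := by
    rw [hγdef, ← pow_mul, mul_comm, pow_mul, hη1, one_pow]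
  set u : 𝓞 (CyclotomicField p ℚ) := γ - η with hudef
  -- u ∈ 𝔭 and u ∉ 𝔭 ^ 2
  have hi1' : 1 ≤ i - 1 := by omega
  have hζ' : IsPrimitiveRoot (ζ ^ (i - 1)) (p : ℕ) := by
    refine hζ.pow_of_coprime (i - 1) ?_
    exact Nat.Coprime.symm ((Nat.Prime.coprime_iff_not_dvd hp).mpr
      (Nat.not_dvd_of_pos_of_lt (by omega) (by omega)))
  have hζ'int : hζ'.toInteger = η ^ (i - 1) := by
    apply NumberField.RingOfIntegers.coe_injective
    push_cast [NumberField.RingOfIntegers.coe_eq_algebraMap, map_pow, hηcoe]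
    rfl
  have hπ' : Prime (η ^ (i - 1) - 1) := by
    rw [← hζ'int]; exact hζ'.zeta_sub_one_prime'
  obtain ⟨t, ht⟩ : π ∣ η ^ (i - 1) - 1 := by
    simpa using sub_dvd_pow_sub_pow η 1 (i - 1)
  have htunit : IsUnit t := by
    rcases hπ'.irreducible.isUnit_or_isUnit ht with h | h
    · exact absurd h hπ.not_isUnit
    · exact h
  have hufac : u = π * (η * t) := by
    have : η ^ i = η ^ (i - 1) * η := by
      rw [← pow_succ, Nat.sub_add_cancel (by omega)]
    rw [hudef, hγdef, this]; linear_combination η * ht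
  have humem : u ∈ 𝔭 := by
    rw [h𝔭, Ideal.mem_span_singleton, hufac]; exact Dvd.intro _ rfl
  have hunot : u ∉ 𝔭 ^ 2 := by
    rw [h𝔭, Ideal.span_singleton_pow, Ideal.mem_span_singleton, hufac, pow_two]
    intro hdvd
    have : π ∣ η * t := (mul_dvd_mul_iff_left hπ0).mp hdvd
    have : IsUnit π := isUnit_of_dvd_unit this ((hζ.toInteger_isPrimitiveRoot.isUnit p.ne_zero).mul htunit)
    exact hπ.not_isUnit this
  -- the residue field
  haveI hPmax : 𝔭.IsMaximal := by
    refine Ideal.IsPrime.isMaximal hPprime ?_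
    rw [h𝔭, Ne, Ideal.span_singleton_eq_bot]
    exact hπ0
  haveI : Nontrivial (𝓞 (CyclotomicField p ℚ) ⧸ 𝔭) := Ideal.Quotient.nontrivial_iff.mpr hPprime.ne_top
  have hp0 : (((p : ℕ) : 𝓞 (CyclotomicField p ℚ) ⧸ 𝔭)) = 0 := by
    rw [← map_natCast (Ideal.Quotient.mk 𝔭)]
    exact Ideal.Quotient.eq_zero_iff_mem.mpr hpmem
  haveI : CharP (𝓞 (CyclotomicField p ℚ) ⧸ 𝔭) (p : ℕ) := (CharP.charP_iff_prime_eq_zero hp).mpr hp0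
  have hmkη : Ideal.Quotient.mk 𝔭 η = 1 := by
    have : η - 1 ∈ 𝔭 := by
      rw [h𝔭, ← hπdef]; exact Ideal.subset_span rfl
    have := Ideal.Quotient.eq.mpr this
    simpa using this
  have hmkγ : Ideal.Quotient.mk 𝔭 γ = 1 := by
    rw [hγdef, map_pow, hmkη, one_pow]
  -- the integral polynomial
  set Φ : (𝓞 (CyclotomicField p ℚ))[X] := (X - C γ) ^ (p : ℕ) + C (1 + γ - η) with hΦdef
  have hΦmonic : Φ.Monic := by
    refine ((monic_X_sub_C γ).pow (p : ℕ)).add_of_left ?_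
    rw [degree_pow, degree_X_sub_C]
    refine lt_of_le_of_lt degree_C_le ?_
    simp only [nsmul_eq_mul, mul_one]
    exact_mod_cast Nat.cast_pos.mpr hp.pos
  have hΦmap : Φ.map (Ideal.Quotient.mk 𝔭) = X ^ (p : ℕ) := by
    have hsub : ((X : (𝓞 (CyclotomicField p ℚ) ⧸ 𝔭)[X]) - (1 : (𝓞 (CyclotomicField p ℚ) ⧸ 𝔭)[X])) ^ (p : ℕ)
        = X ^ (p : ℕ) - (1 : (𝓞 (CyclotomicField p ℚ) ⧸ 𝔭)[X]) ^ (p : ℕ) :=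
      sub_pow_char _ _
    rw [hΦdef]
    push_cast [Polynomial.map_add, Polynomial.map_pow, Polynomial.map_sub, Polynomial.map_X,
      map_C, hmkγ, map_sub, map_add, map_one, hmkη]
    simp only [Polynomial.map_one]
    rw [hsub]
    ring
  have hΦdeg : Φ.natDegree = (p : ℕ) := by
    rw [← hΦmonic.natDegree_map (Ideal.Quotient.mk 𝔭), hΦmap, natDegree_X_pow]
  have hΦ0 : Φ.coeff 0 = u := by
    rw [hΦdef, coeff_zero_eq_eval_zero]
    simp only [eval_add, eval_pow, eval_sub, eval_X, eval_C, zero_sub]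
    rw [hodd.neg_pow, hγ1, hudef]
    ring
  -- the iterates over O
  set Ψ : ℕ → (𝓞 (CyclotomicField p ℚ))[X] := fun n => (fun q : (𝓞 (CyclotomicField p ℚ))[X] => q.comp Φ)^[n] X with hΨdef
  have hΨsucc : ∀ n, Ψ (n + 1) = Φ.comp (Ψ n) := by
    intro n
    rw [hΨdef]
    simp only
    rw [Function.iterate_succ_apply, X_comp, iterate_comp_apply]
  have key : ∀ n, 1 ≤ n → (Ψ n).Monic ∧ (Ψ n).natDegree = (p : ℕ) ^ n ∧
      (Ψ n).map (Ideal.Quotient.mk 𝔭) = X ^ ((p : ℕ) ^ n) ∧ (Ψ n).coeff 0 - u ∈ 𝔭 ^ 2 := by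
    intro n hn
    induction n with
    | zero => omega
    | succ n ih =>
      rcases Nat.eq_or_lt_of_le hn with h1 | h1
      · -- base case n + 1 = 1
        have hn0 : n = 0 := by omega
        subst hn0
        have hΨ1 : Ψ 1 = Φ := by
          rw [hΨdef]; simp
        refine ⟨by rw [hΨ1]; exact hΦmonic, by rw [hΨ1, hΦdeg, pow_one],
          by rw [hΨ1, hΦmap, pow_one], ?_⟩
        rw [hΨ1, hΦ0, sub_self]
        exact zero_mem _
      · have hn' : 1 ≤ n := by omega
        obtain ⟨hmon, hdeg, hmap, h0⟩ := ih hn'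
        have hstep := hΨsucc n
        have hA : (Ψ n).coeff 0 ∈ 𝔭 := by
          have : (Ψ n).coeff 0 = ((Ψ n).coeff 0 - u) + u := by ring
          rw [this]
          exact Ideal.add_mem _ (Ideal.pow_le_self two_ne_zero h0) humem
        set A : 𝓞 (CyclotomicField p ℚ) := (Ψ n).coeff 0 with hAdef
        have hmon' : (Ψ (n + 1)).Monic := by
          rw [hstep]
          exact hΦmonic.comp hmon (by rw [hdeg]; positivity)
        have hmap' : (Ψ (n + 1)).map (Ideal.Quotient.mk 𝔭) = X ^ ((p : ℕ) ^ (n + 1)) := by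
          rw [hstep, Polynomial.map_comp, hΦmap, hmap, X_pow_comp, ← pow_mul, ← pow_succ]
        have hdeg' : (Ψ (n + 1)).natDegree = (p : ℕ) ^ (n + 1) := by
          rw [← hmon'.natDegree_map (Ideal.Quotient.mk 𝔭), hmap', natDegree_X_pow]
        refine ⟨hmon', hdeg', hmap', ?_⟩
        -- constant term
        have hc : (Ψ (n + 1)).coeff 0 = (A - γ) ^ (p : ℕ) + (1 + γ - η) := by
          rw [hstep, coeff_zero_eq_eval_zero, eval_comp, ← coeff_zero_eq_eval_zero, ← hAdef,
            hΦdef]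
          simp
        set S : 𝓞 (CyclotomicField p ℚ) := ∑ j ∈ Finset.range (p : ℕ), (A - γ) ^ j * (-γ) ^ ((p : ℕ) - 1 - j) with hSdef
        have hgeom : S * ((A - γ) - (-γ)) = (A - γ) ^ (p : ℕ) - (-γ) ^ (p : ℕ) :=
          geom_sum₂_mul _ _ _
        have hSA : (A - γ) ^ (p : ℕ) + 1 = S * A := by
          have hng : (-γ) ^ (p : ℕ) = -1 := by rw [hodd.neg_pow, hγ1]
          rw [hng] at hgeom
          have : (A - γ) - (-γ) = A := by ring
          rw [this] at hgeom
          rw [hgeom]; ring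
        have hSmem : S ∈ 𝔭 := by
          rw [← Ideal.Quotient.eq_zero_iff_mem]
          have hmkA : Ideal.Quotient.mk 𝔭 A = 0 := Ideal.Quotient.eq_zero_iff_mem.mpr hA
          have heven : Even ((p : ℕ) - 1) := Nat.Odd.sub_odd hodd odd_one
          rw [hSdef, map_sum]
          have : ∀ j ∈ Finset.range (p : ℕ),
              (Ideal.Quotient.mk 𝔭) ((A - γ) ^ j * (-γ) ^ ((p : ℕ) - 1 - j)) = (-1 : 𝓞 (CyclotomicField p ℚ) ⧸ 𝔭) ^ (j + ((p : ℕ) - 1 - j)) := by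
            intro j hj
            rw [map_mul, map_pow, map_pow, map_sub, map_neg, hmkA, hmkγ, zero_sub, ← pow_add]
          rw [Finset.sum_congr rfl this]
          have : ∀ j ∈ Finset.range (p : ℕ), (-1 : 𝓞 (CyclotomicField p ℚ) ⧸ 𝔭) ^ (j + ((p : ℕ) - 1 - j)) = 1 := by
            intro j hj
            rw [Finset.mem_range] at hj
            have : j + ((p : ℕ) - 1 - j) = (p : ℕ) - 1 := by omega
            rw [this, heven.neg_one_pow]
          rw [Finset.sum_congr rfl this, Finset.sum_const, Finset.card_range, nsmul_eq_mul,
            mul_one, hp0]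
        have : (Ψ (n + 1)).coeff 0 - u = S * A := by
          rw [hc, hudef]
          linear_combination hSA
        rw [this, pow_two]
        exact Ideal.mul_mem_mul hSmem hA
  -- Eisenstein and irreducibility over O
  have hirrO : ∀ n, 1 ≤ n → Irreducible (Ψ n) := by
    intro n hn
    obtain ⟨hmon, hdeg, hmap, h0⟩ := key n hn
    have heis : (Ψ n).IsEisensteinAt 𝔭 := by
      refine ⟨?_, ?_, ?_⟩
      · rw [hmon.leadingCoeff]
        intro h
        exact hPprime.ne_top (Ideal.eq_top_of_isUnit_mem _ h isUnit_one)
      · intro k hk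
        rw [← Ideal.Quotient.eq_zero_iff_mem]
        have : (Ideal.Quotient.mk 𝔭) ((Ψ n).coeff k) = ((Ψ n).map (Ideal.Quotient.mk 𝔭)).coeff k := by
          rw [coeff_map]
        rw [this, hmap, coeff_X_pow, if_neg]
        rw [hdeg] at hk
        omega
      · intro hmem
        apply hunot
        have : u = (Ψ n).coeff 0 - ((Ψ n).coeff 0 - u) := by ring
        rw [this]
        exact Ideal.sub_mem _ hmem h0
    refine heis.irreducible hPprime hmon.isPrimitive ?_
    rw [hdeg]
    positivity
  -- transfer to K
  intro n hn
  have hmapφ : Φ.map (algebraMap (𝓞 (CyclotomicField p ℚ)) (CyclotomicField p ℚ)) = φ := by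
    rw [hΦdef, hφ, hγdef]
    simp only [Polynomial.map_add, Polynomial.map_pow, Polynomial.map_sub, Polynomial.map_X,
      Polynomial.map_one, map_C, map_add, map_sub, map_one, map_pow, hηcoe, C_pow, C_1]
  have hiter : ∀ m, (fun q : (CyclotomicField p ℚ)[X] => q.comp φ)^[m] X = (Ψ m).map (algebraMap (𝓞 (CyclotomicField p ℚ)) (CyclotomicField p ℚ)) := by
    intro m
    induction m with
    | zero => simp [hΨdef]
    | succ m ihm =>
      rw [Function.iterate_succ_apply', ihm, hΨdef]
      simp only
      rw [Function.iterate_succ_apply']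
      rw [Polynomial.map_comp, hmapφ]
  rw [hiter n]
  obtain ⟨hmon, _, _, _⟩ := key n hn
  exact (hmon.irreducible_iff_irreducible_map_fraction_map).mp (hirrO n hn)
end
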